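/- arXiv:1509.06866 — 4 statements merged into one kernel-verified Lean document; each statement's English description precedes it below -/
import Mathlib

section
/- For a real random variable Y with E|Y| < ∞ and τ ∈ (0,1), the function x ↦ E[I_τ(x,Y)] where I_τ(x,y) = τ(y−x)1_{y≥x} − (1−τ)(x−y)1_{y<x} is strictly decreasing, continuous, and has exactly one zero. -/
/-!
For each `y`, the map `x ↦ ident τ x y` is `1`-Lipschitz and decreases with slope at least
`min τ (1 - τ)`. Both properties survive integration against `P`, so `x ↦ E[ident τ x Y]` is
continuous and tends to `±∞` at `∓∞`; it therefore has a zero by the intermediate value theorem,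
and only one since it is strictly decreasing.
-/

open MeasureTheory Filter Set Asymptotics

noncomputable def ident (τ x y : ℝ) : ℝ :=
  if x ≤ y then τ * (y - x) else -((1 - τ) * (x - y))

noncomputable def score (τ x y : ℝ) : ℝ :=
  τ / 2 * ((max (y - x) 0) ^ 2 - (max y 0) ^ 2) +
    (1 - τ) / 2 * ((max (x - y) 0) ^ 2 - (max (-y) 0) ^ 2)

lemma lipschitzWith_integral {α Ω : Type*} [PseudoMetricSpace α] [MeasurableSpace Ω]
    {P : Measure Ω} [IsProbabilityMeasure P] {g : α → Ω → ℝ} {K : NNReal}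
    (hg : ∀ x, Integrable (g x) P) (hK : ∀ ω, LipschitzWith K (g · ω)) :
    LipschitzWith K (fun x => ∫ ω, g x ω ∂P) := by
  refine LipschitzWith.of_dist_le_mul fun x₁ x₂ => ?_
  rw [dist_eq_norm, ← integral_sub (hg x₁) (hg x₂)]
  have hpointwise : ∀ ω, ‖g x₁ ω - g x₂ ω‖ ≤ K * dist x₁ x₂ := fun ω => by
    simpa only [dist_eq_norm] using (hK ω).dist_le_mul x₁ x₂
  simpa using norm_integral_le_of_norm_le_const (μ := P) (Eventually.of_forall hpointwise)

lemma strictAnti_of_add_mul_sub_le {f : ℝ → ℝ} {c : ℝ} (hc : 0 < c)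
    (h : ∀ ⦃x y⦄, x ≤ y → f y + c * (y - x) ≤ f x) : StrictAnti f := fun x y hxy => by
  nlinarith [h hxy.le]

lemma surjective_of_add_mul_sub_le {f : ℝ → ℝ} {c : ℝ} (hc : 0 < c) (hf : Continuous f)
    (h : ∀ ⦃x y⦄, x ≤ y → f y + c * (y - x) ≤ f x) : Function.Surjective f := by
  refine hf.surjective' ?_ ?_
  · refine tendsto_atTop_mono' _ ?_ (tendsto_atTop_add_const_left _ (f 0)
      ((tendsto_neg_atBot_atTop).atTop_mul_const hc))
    filter_upwards [eventually_le_atBot 0] with x hx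
    linarith [h hx]
  · refine tendsto_atBot_mono' _ ?_ (tendsto_atBot_add_const_left _ (f 0)
      ((tendsto_neg_atTop_atBot).atBot_mul_const hc))
    filter_upwards [eventually_ge_atTop 0] with x hx
    linarith [h hx]

lemma ident_eq_max (τ x y : ℝ) :
    ident τ x y = τ * max (y - x) 0 - (1 - τ) * max (x - y) 0 := by
  unfold ident
  split_ifs
  · rw [max_eq_left (by linarith), max_eq_right (by linarith)]; ring
  · rw [max_eq_right (by linarith), max_eq_left (by linarith)]; ring

lemma integrable_ident {Ω : Type*} [MeasurableSpace Ω] {P : Measure Ω} [IsFiniteMeasure P]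
    {Y : Ω → ℝ} (hY : Integrable Y P) (τ x : ℝ) :
    Integrable (fun ω => ident τ x (Y ω)) P := by
  simp only [ident_eq_max]
  exact (((hY.sub (integrable_const x)).pos_part).const_mul τ).sub
    ((((integrable_const x).sub hY).pos_part).const_mul (1 - τ))

lemma lipschitzWith_ident {τ : ℝ} (hτ : τ ∈ Icc (0 : ℝ) 1) (y : ℝ) :
    LipschitzWith 1 (fun x => ident τ x y) := by
  obtain ⟨h0, h1⟩ := hτ
  refine LipschitzWith.of_dist_le_mul fun x₁ x₂ => ?_
  rw [NNReal.coe_one, one_mul, Real.dist_eq, Real.dist_eq, abs_le]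
  unfold ident
  constructor <;> split_ifs <;> cases abs_cases (x₁ - x₂) <;> nlinarith

lemma ident_add_mul_sub_le {τ : ℝ} (hτ : τ ∈ Icc (0 : ℝ) 1) {x₁ x₂ : ℝ} (h : x₁ ≤ x₂) (y : ℝ) :
    ident τ x₂ y + min τ (1 - τ) * (x₂ - x₁) ≤ ident τ x₁ y := by
  obtain ⟨h0, h1⟩ := hτ
  have hmin₁ := min_le_left τ (1 - τ)
  have hmin₂ := min_le_right τ (1 - τ)
  unfold ident
  split_ifs <;> nlinarith

lemma integral_ident_add_mul_sub_le {Ω : Type*} [MeasurableSpace Ω] {P : Measure Ω}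
    [IsProbabilityMeasure P] {Y : Ω → ℝ} (hY : Integrable Y P) {τ : ℝ} (hτ : τ ∈ Icc (0 : ℝ) 1)
    {x₁ x₂ : ℝ} (h : x₁ ≤ x₂) :
    ∫ ω, ident τ x₂ (Y ω) ∂P + min τ (1 - τ) * (x₂ - x₁) ≤ ∫ ω, ident τ x₁ (Y ω) ∂P := by
  have hmono : ∫ ω, (ident τ x₂ (Y ω) + min τ (1 - τ) * (x₂ - x₁)) ∂P
      ≤ ∫ ω, ident τ x₁ (Y ω) ∂P :=
    integral_mono ((integrable_ident hY τ x₂).add (integrable_const _))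
      (integrable_ident hY τ x₁) fun ω => ident_add_mul_sub_le hτ h (Y ω)
  rwa [integral_add (integrable_ident hY τ x₂) (integrable_const _), integral_const,
    probReal_univ, one_smul] at hmono

theorem expectile_ident_strictAnti_continuous_uniqueZero
    {Ω : Type*} [MeasurableSpace Ω] (P : Measure Ω) [IsProbabilityMeasure P]
    (Y : Ω → ℝ) (hY : Integrable Y P) (τ : ℝ) (hτ : τ ∈ Set.Ioo (0:ℝ) 1) :
    StrictAnti (fun x : ℝ => ∫ ω, ident τ x (Y ω) ∂P) ∧
    Continuous (fun x : ℝ => ∫ ω, ident τ x (Y ω) ∂P) ∧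
    ∃! x : ℝ, ∫ ω, ident τ x (Y ω) ∂P = 0 := by
  have hτ' : τ ∈ Icc (0 : ℝ) 1 := Ioo_subset_Icc_self hτ
  have hc : 0 < min τ (1 - τ) := lt_min hτ.1 (sub_pos.2 hτ.2)
  have hdecay := fun x₁ x₂ (h : x₁ ≤ x₂) => integral_ident_add_mul_sub_le (P := P) hY hτ' h
  have hanti := strictAnti_of_add_mul_sub_le hc hdecay
  have hcont := (lipschitzWith_integral (integrable_ident hY τ) fun ω =>
    lipschitzWith_ident hτ' (Y ω)).continuous
  obtain ⟨x, hx⟩ := surjective_of_add_mul_sub_le hc hcont hdecay 0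
  exact ⟨hanti, hcont, x, hx, fun y hy => hanti.injective (hy.trans hx.symm)⟩
end

section
/- If P(Y > y) = (c⁺ + o(1)) y^{−α} L(y) and P(Y < −y) = (c⁻ + o(1)) y^{−α} L(y) as y → ∞ for slowly varying L, α ∈ (1,2), and c⁺ + c⁻ > 0, then for τ ∈ (0,1): P(I_τ(μ_τ,Y) > y) = τ^α (c⁺ + o(1)) y^{−α} L(y) and P(I_τ(μ_τ,Y) < −y) = (1−τ)^α (c⁻ + o(1)) y^{−α} L(y) as y → ∞. -/
open MeasureTheory Filter Set Asymptotics

/-! For `y > 0` the identification function `ident τ μ` is `> y` exactly when `Y > μ + y / τ`,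
so the upper tail of `ident τ μ Y` is the tail of `Y` at an affine function of `y`. Regular
variation turns the dilation by `1 / τ` into the factor `τ ^ α`, and monotonicity of the tail
absorbs the shift by `μ`, since `F (l y) / (y ^ (-α) L y) → c l ^ (-α)` is continuous in `l`.
The lower tail is the upper tail of `-Y` with `τ` replaced by `1 - τ`. -/

theorem tendsto_scaled_div_of_slowlyVarying {F L : ℝ → ℝ} {α c : ℝ}
    (hLpos : ∀ y > 0, 0 < L y)
    (hslow : ∀ l > 0, Tendsto (fun y => L (l * y) / L y) atTop (nhds 1))
    (htail : Tendsto (fun y => F y / (y ^ (-α) * L y)) atTop (nhds c))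
    {l : ℝ} (hl : 0 < l) :
    Tendsto (fun y => F (l * y) / (y ^ (-α) * L y)) atTop (nhds (c * l ^ (-α))) := by
  have hscaled : Tendsto (fun y => F (l * y) / ((l * y) ^ (-α) * L (l * y))) atTop (nhds c) :=
    htail.comp (tendsto_id.const_mul_atTop hl)
  have hprod := hscaled.mul ((tendsto_const_nhds (x := l ^ (-α))).mul (hslow l hl))
  rw [mul_one] at hprod
  refine hprod.congr' ?_
  filter_upwards [eventually_gt_atTop 0] with y hy
  have hLy := (hLpos y hy).ne'
  have hLly := (hLpos _ (mul_pos hl hy)).ne'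
  have hlα := (Real.rpow_pos_of_pos hl (-α)).ne'
  have hyα := (Real.rpow_pos_of_pos hy (-α)).ne'
  rw [Real.mul_rpow hl.le hy.le]
  field_simp

theorem tendsto_affine_div_of_antitone {F g φ : ℝ → ℝ} (hF : Antitone F)
    (hg : ∀ᶠ y in atTop, 0 ≤ g y)
    (H : ∀ l > 0, Tendsto (fun y => F (l * y) / g y) atTop (nhds (φ l)))
    {a : ℝ} (ha : 0 < a) (hφ : ContinuousAt φ a) (b : ℝ) :
    Tendsto (fun y => F (a * y + b) / g y) atTop (nhds (φ a)) := by
  have affine_le : ∀ l, a < l → ∀ᶠ y in atTop, a * y + b ≤ l * y := fun l hl =>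
    ((tendsto_id.const_mul_atTop (sub_pos.2 hl)).eventually_ge_atTop b).mono fun y hy => by
      simp only [id] at hy; linarith
  have le_affine : ∀ l, l < a → ∀ᶠ y in atTop, l * y ≤ a * y + b := fun l hl =>
    ((tendsto_id.const_mul_atTop (sub_pos.2 hl)).eventually_ge_atTop (-b)).mono fun y hy => by
      simp only [id] at hy; linarith
  refine tendsto_order.2 ⟨fun u hu => ?_, fun u hu => ?_⟩
  · obtain ⟨l, hul, hal⟩ : ∃ l, u < φ l ∧ a < l :=
      ((hφ.tendsto.mono_left nhdsWithin_le_nhds).eventually (lt_mem_nhds hu)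
        |>.and self_mem_nhdsWithin).exists (f := nhdsWithin a (Ioi a))
    filter_upwards [(H l (ha.trans hal)).eventually (lt_mem_nhds hul), affine_le l hal, hg]
      with y hlt hle hgy
    exact hlt.trans_le (div_le_div_of_nonneg_right (hF hle) hgy)
  · obtain ⟨l, hul, hl, hla⟩ : ∃ l, φ l < u ∧ 0 < l ∧ l < a :=
      ((hφ.tendsto.mono_left nhdsWithin_le_nhds).eventually (gt_mem_nhds hu)
        |>.and (Ioo_mem_nhdsLT ha)).exists (f := nhdsWithin a (Iio a))
    filter_upwards [(H l hl).eventually (gt_mem_nhds hul), le_affine l hla, hg]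
      with y hlt hle hgy
    exact (div_le_div_of_nonneg_right (hF hle) hgy).trans_lt hlt

theorem tendsto_affine_div_of_antitone_of_slowlyVarying {F L : ℝ → ℝ} {α c : ℝ}
    (hF : Antitone F) (hLpos : ∀ y > 0, 0 < L y)
    (hslow : ∀ l > 0, Tendsto (fun y => L (l * y) / L y) atTop (nhds 1))
    (htail : Tendsto (fun y => F y / (y ^ (-α) * L y)) atTop (nhds c))
    {a : ℝ} (ha : 0 < a) (b : ℝ) :
    Tendsto (fun y => F (a * y + b) / (y ^ (-α) * L y)) atTop (nhds (c * a ^ (-α))) := by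
  have hg : ∀ᶠ y in atTop, 0 ≤ y ^ (-α) * L y := by
    filter_upwards [eventually_gt_atTop 0] with y hy
    exact mul_nonneg (Real.rpow_nonneg hy.le _) (hLpos y hy).le
  exact tendsto_affine_div_of_antitone hF hg
    (fun l hl => tendsto_scaled_div_of_slowlyVarying hLpos hslow htail hl) ha
    ((Real.continuousAt_rpow_const a (-α) (Or.inl ha.ne')).const_mul c) b

theorem lt_ident_iff {τ μ z y : ℝ} (hτ : 0 < τ) (hτ1 : τ ≤ 1) (hy : 0 < y) :
    y < ident τ μ z ↔ τ⁻¹ * y + μ < z := by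
  unfold ident
  split_ifs with h
  · rw [← lt_sub_iff_add_lt, inv_mul_lt_iff₀ hτ]
  · have : 0 < τ⁻¹ * y := by positivity
    exact iff_of_false (by nlinarith) (by linarith)

theorem ident_neg (τ x y : ℝ) : ident (1 - τ) (-x) (-y) = -ident τ x y := by
  unfold ident
  split_ifs with h₁ h₂ h₂
  · obtain rfl : x = y := by linarith
    ring
  · ring
  · ring
  · exact absurd (neg_le_neg (not_le.1 h₂).le) h₁

theorem tendsto_upper_tail_ident_div {Ω : Type*} [MeasurableSpace Ω] (P : Measure Ω)
    [IsFiniteMeasure P] (Y : Ω → ℝ) {τ : ℝ} (hτ : 0 < τ) (hτ1 : τ ≤ 1) (μ : ℝ) {α c : ℝ}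
    {L : ℝ → ℝ} (hLpos : ∀ y > 0, 0 < L y)
    (hslow : ∀ l > 0, Tendsto (fun y => L (l * y) / L y) atTop (nhds 1))
    (htail : Tendsto (fun y => (P {ω | y < Y ω}).toReal / (y ^ (-α) * L y)) atTop (nhds c)) :
    Tendsto (fun y => (P {ω | y < ident τ μ (Y ω)}).toReal / (y ^ (-α) * L y))
      atTop (nhds (τ ^ α * c)) := by
  have hF : Antitone fun t => (P {ω | t < Y ω}).toReal := fun s t hst =>
    ENNReal.toReal_mono (measure_ne_top P _) (measure_mono fun ω hω => hst.trans_lt hω)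
  have hshift := tendsto_affine_div_of_antitone_of_slowlyVarying hF hLpos hslow htail
    (inv_pos.2 hτ) μ
  rw [Real.inv_rpow hτ.le, Real.rpow_neg hτ.le, inv_inv, mul_comm] at hshift
  refine hshift.congr' ?_
  filter_upwards [eventually_gt_atTop 0] with y hy
  simp only [lt_ident_iff hτ hτ1 hy]

theorem ident_tails_regularly_varying_general
    {Ω : Type*} [MeasurableSpace Ω] (P : Measure Ω) [IsProbabilityMeasure P]
    (Y : Ω → ℝ)
    (τ : ℝ) (hτ : τ ∈ Set.Ioo (0:ℝ) 1)
    (μ : ℝ)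
    (α : ℝ)
    (cp cm : ℝ)
    (L : ℝ → ℝ) (hLpos : ∀ y > 0, 0 < L y)
    (hslow : ∀ l > 0, Tendsto (fun y => L (l * y) / L y) atTop (nhds 1))
    (htailp : Tendsto (fun y => (P {ω | y < Y ω}).toReal / (y ^ (-α) * L y))
      atTop (nhds cp))
    (htailm : Tendsto (fun y => (P {ω | Y ω < -y}).toReal / (y ^ (-α) * L y))
      atTop (nhds cm)) :
    Tendsto (fun y => (P {ω | y < ident τ μ (Y ω)}).toReal / (y ^ (-α) * L y))
      atTop (nhds (τ ^ α * cp)) ∧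
    Tendsto (fun y => (P {ω | ident τ μ (Y ω) < -y}).toReal / (y ^ (-α) * L y))
      atTop (nhds ((1 - τ) ^ α * cm)) := by
  obtain ⟨hτ0, hτ1⟩ := hτ
  refine ⟨tendsto_upper_tail_ident_div P Y hτ0 hτ1.le μ hLpos hslow htailp, ?_⟩
  have htail_neg : Tendsto (fun y => (P {ω | y < -Y ω}).toReal / (y ^ (-α) * L y))
      atTop (nhds cm) := by
    simpa only [lt_neg] using htailm
  simpa only [ident_neg, lt_neg] using
    tendsto_upper_tail_ident_div P (fun ω => -Y ω) (sub_pos.2 hτ1) (by linarith) (-μ)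
      hLpos hslow htail_neg

theorem ident_tails_regularly_varying
    {Ω : Type*} [MeasurableSpace Ω] (P : Measure Ω) [IsProbabilityMeasure P]
    (Y : Ω → ℝ) (hY : Integrable Y P)
    (τ : ℝ) (hτ : τ ∈ Set.Ioo (0:ℝ) 1)
    (μ : ℝ) (hμ : ∫ ω, ident τ μ (Y ω) ∂P = 0)
    (α : ℝ) (hα : α ∈ Set.Ioo (1:ℝ) 2)
    (cp cm : ℝ) (hcp : 0 ≤ cp) (hcm : 0 ≤ cm) (hcsum : 0 < cp + cm)
    (L : ℝ → ℝ) (hLpos : ∀ y > 0, 0 < L y)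
    (hslow : ∀ l > 0, Tendsto (fun y => L (l * y) / L y) atTop (nhds 1))
    (htailp : Tendsto (fun y => (P {ω | y < Y ω}).toReal / (y ^ (-α) * L y))
      atTop (nhds cp))
    (htailm : Tendsto (fun y => (P {ω | Y ω < -y}).toReal / (y ^ (-α) * L y))
      atTop (nhds cm)) :
    Tendsto (fun y => (P {ω | y < ident τ μ (Y ω)}).toReal / (y ^ (-α) * L y))
      atTop (nhds (τ ^ α * cp)) ∧
    Tendsto (fun y => (P {ω | ident τ μ (Y ω) < -y}).toReal / (y ^ (-α) * L y))
      atTop (nhds ((1 - τ) ^ α * cm)) :=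
  ident_tails_regularly_varying_general P Y τ hτ μ α cp cm L hLpos hslow htailp htailm
end

section
/- If y^α P(Y > y) → c⁺ and y^α P(Y < −y) → c⁻ as y → ∞, with 1 < α < 2, then y^α P(I_τ(μ_τ,Y) > y) → τ^α c⁺ and y^α P(I_τ(μ_τ,Y) < −y) → (1−τ)^α c⁻ as y → ∞. -/
open MeasureTheory Filter Set Asymptotics

/-!
For `y ≥ 0`, `ident τ μ` is affine on each side of `μ`, with slope `τ` above and `1 - τ` below, so
`{y < I_τ(μ, Y)} = {y / τ + μ < Y}` and `{I_τ(μ, Y) < -y} = {Y < μ - y / (1 - τ)}`: each tail of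
`I_τ(μ, Y)` is a tail of `Y` at a rescaled and shifted level, and the shift is negligible against
`y ^ α`, while the rescaling by `b` contributes the factor `b ^ α`.
-/

lemma tendsto_div_div_add_const_atTop {b : ℝ} (hb : b ≠ 0) (d : ℝ) :
    Tendsto (fun y : ℝ => y / (y / b + d)) atTop (nhds b) := by
  have hinv : Tendsto (fun y : ℝ => (b⁻¹ + d / y)⁻¹) atTop (nhds b) := by
    simpa using ((tendsto_const_nhds (x := b⁻¹)).add
      (tendsto_const_nhds.div_atTop tendsto_id)).inv₀ (by simpa using hb)
  refine hinv.congr' ?_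
  filter_upwards [eventually_ne_atTop (0 : ℝ)] with y hy
  field_simp

lemma tendsto_rpow_mul_comp_div_add_const {f : ℝ → ℝ} {α b c : ℝ} (hb : 0 < b) (d : ℝ)
    (hf : Tendsto (fun y => y ^ α * f y) atTop (nhds c)) :
    Tendsto (fun y => y ^ α * f (y / b + d)) atTop (nhds (b ^ α * c)) := by
  have hg : Tendsto (fun y : ℝ => y / b + d) atTop atTop :=
    tendsto_atTop_add_const_right _ d (tendsto_id.atTop_div_const hb)
  have hratio : Tendsto (fun y : ℝ => (y / (y / b + d)) ^ α) atTop (nhds (b ^ α)) :=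
    (tendsto_div_div_add_const_atTop hb.ne' d).rpow_const (Or.inl hb.ne')
  refine (hratio.mul (hf.comp hg)).congr' ?_
  filter_upwards [eventually_gt_atTop (0 : ℝ), hg.eventually_gt_atTop 0] with y hy hgy
  simp only [Function.comp_apply]
  have hne : (y / b + d) ^ α ≠ 0 := (Real.rpow_pos_of_pos hgy α).ne'
  rw [Real.div_rpow hy.le hgy.le, div_mul_eq_mul_div, mul_left_comm,
    mul_div_cancel_left₀ _ hne]

lemma lt_ident_iff_s13 {τ y : ℝ} (hτ₀ : 0 < τ) (hτ₁ : τ ≤ 1) (hy : 0 ≤ y) (x z : ℝ) :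
    y < ident τ x z ↔ y / τ + x < z := by
  unfold ident
  split_ifs with h
  · rw [← div_lt_iff₀' hτ₀]
    constructor <;> intro <;> linarith
  · have : 0 ≤ y / τ := div_nonneg hy hτ₀.le
    constructor <;> intro <;> nlinarith

lemma ident_lt_neg_iff {τ y : ℝ} (hτ₀ : 0 ≤ τ) (hτ₁ : τ < 1) (hy : 0 ≤ y) (x z : ℝ) :
    ident τ x z < -y ↔ z < x - y / (1 - τ) := by
  have hτ' : 0 < 1 - τ := sub_pos.mpr hτ₁
  unfold ident
  split_ifs with h
  · have : 0 ≤ y / (1 - τ) := div_nonneg hy hτ'.le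
    constructor <;> intro <;> nlinarith
  · rw [neg_lt_neg_iff, ← div_lt_iff₀' hτ']
    constructor <;> intro <;> linarith

theorem ident_tails_normal_attraction_general
    {Ω : Type*} [MeasurableSpace Ω] (P : Measure Ω)
    (Y : Ω → ℝ)
    (τ : ℝ) (hτ : τ ∈ Set.Ioo (0:ℝ) 1)
    (μ : ℝ)
    (α : ℝ) (cp cm : ℝ)
    (htailp : Tendsto (fun y => y ^ α * (P {ω | y < Y ω}).toReal) atTop (nhds cp))
    (htailm : Tendsto (fun y => y ^ α * (P {ω | Y ω < -y}).toReal) atTop (nhds cm)) :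
    Tendsto (fun y => y ^ α * (P {ω | y < ident τ μ (Y ω)}).toReal)
      atTop (nhds (τ ^ α * cp)) ∧
    Tendsto (fun y => y ^ α * (P {ω | ident τ μ (Y ω) < -y}).toReal)
      atTop (nhds ((1 - τ) ^ α * cm)) := by
  obtain ⟨hτ0, hτ1⟩ := hτ
  constructor
  · refine (tendsto_rpow_mul_comp_div_add_const hτ0 μ htailp).congr' ?_
    filter_upwards [eventually_ge_atTop (0 : ℝ)] with y hy
    simp only [lt_ident_iff_s13 hτ0 hτ1.le hy]
  · refine (tendsto_rpow_mul_comp_div_add_const (sub_pos.mpr hτ1) (-μ) htailm).congr' ?_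
    filter_upwards [eventually_ge_atTop (0 : ℝ)] with y hy
    simp only [ident_lt_neg_iff hτ0.le hτ1 hy, ← sub_eq_add_neg, neg_sub]

theorem ident_tails_normal_attraction
    {Ω : Type*} [MeasurableSpace Ω] (P : Measure Ω) [IsProbabilityMeasure P]
    (Y : Ω → ℝ) (hY : Integrable Y P)
    (τ : ℝ) (hτ : τ ∈ Set.Ioo (0:ℝ) 1)
    (μ : ℝ) (hμ : ∫ ω, ident τ μ (Y ω) ∂P = 0)
    (α : ℝ) (hα : α ∈ Set.Ioo (1:ℝ) 2) (cp cm : ℝ)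
    (htailp : Tendsto (fun y => y ^ α * (P {ω | y < Y ω}).toReal) atTop (nhds cp))
    (htailm : Tendsto (fun y => y ^ α * (P {ω | Y ω < -y}).toReal) atTop (nhds cm)) :
    Tendsto (fun y => y ^ α * (P {ω | y < ident τ μ (Y ω)}).toReal)
      atTop (nhds (τ ^ α * cp)) ∧
    Tendsto (fun y => y ^ α * (P {ω | ident τ μ (Y ω) < -y}).toReal)
      atTop (nhds ((1 - τ) ^ α * cm)) :=
  ident_tails_normal_attraction_general P Y τ hτ μ α cp cm htailp htailm
end

section
/- With τᵢ* := (iY₍ᵢ₎ − ∑_{k=1}^i Y₍ₖ₎) / ∑_{k=1}^n |Y₍ₖ₎ − Y₍ᵢ₎| for i = 1,…,n (assuming the denominator is positive), the empirical τ-expectile satisfies μ̂_τ = Y₍ᵢ₎ if and only if τ = τᵢ*; moreover τᵢ* ≤ τᵢ₊₁* for i = 1,…,n−1. -/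
open MeasureTheory Filter Set Asymptotics

/-!
Since `ident τ x y = τ |y - x| - (x - y)⁺`, the estimating equation at `x` reads
`τ ∑ |Y k - x| = ∑ (x - Y k)⁺`, so `x` solves it exactly for the level
`τ*(x) = ∑ (x - Y k)⁺ / ∑ |Y k - x|`, and at `x = Y₍ᵢ₎` the numerator is
`i Y₍ᵢ₎ - ∑_{k ≤ i} Y₍ₖ₎`. The solution is unique because the left-hand side is strictly
decreasing in `x`. Writing `∑ |Y k - x| = N + P` with `N = ∑ (x - Y k)⁺` nondecreasing and
`P = ∑ (Y k - x)⁺` nonincreasing in `x`, the level `N / (N + P)` is nondecreasing.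
-/

lemma ident_eq_mul_abs_sub (τ x y : ℝ) : ident τ x y = τ * |y - x| - max (x - y) 0 := by
  unfold ident
  split_ifs with h
  · rw [abs_of_nonneg (sub_nonneg.2 h), max_eq_right (sub_nonpos.2 h)]
    ring
  · rw [abs_of_neg (sub_neg.2 (not_le.1 h)), max_eq_left (sub_pos.2 (not_le.1 h)).le]
    ring

lemma ident_strictAnti {τ : ℝ} (hτ₀ : 0 < τ) (hτ₁ : τ < 1) (y : ℝ) :
    StrictAnti fun x => ident τ x y := by
  intro x x' hxx'
  simp only [ident]
  split_ifs <;> nlinarith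

section Sums

variable {ι : Type*} (s : Finset ι) (y : ι → ℝ)

lemma sum_ident_eq (τ x : ℝ) :
    ∑ k ∈ s, ident τ x (y k) = τ * ∑ k ∈ s, |y k - x| - ∑ k ∈ s, max (x - y k) 0 := by
  simp only [ident_eq_mul_abs_sub, Finset.sum_sub_distrib, Finset.mul_sum]

lemma sum_ident_eq_zero_iff {τ x : ℝ} (hpos : 0 < ∑ k ∈ s, |y k - x|) :
    ∑ k ∈ s, ident τ x (y k) = 0 ↔
      τ = (∑ k ∈ s, max (x - y k) 0) / ∑ k ∈ s, |y k - x| := by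
  rw [sum_ident_eq, sub_eq_zero, eq_div_iff hpos.ne']

variable {s} in
lemma sum_ident_strictAnti (hs : s.Nonempty) {τ : ℝ} (hτ₀ : 0 < τ) (hτ₁ : τ < 1) :
    StrictAnti fun x => ∑ k ∈ s, ident τ x (y k) :=
  fun _ _ hxx' => Finset.sum_lt_sum_of_nonempty hs fun k _ => ident_strictAnti hτ₀ hτ₁ (y k) hxx'

lemma sum_abs_sub_eq (x : ℝ) :
    ∑ k ∈ s, |y k - x| = ∑ k ∈ s, max (x - y k) 0 + ∑ k ∈ s, max (y k - x) 0 := by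
  rw [← Finset.sum_add_distrib]
  refine Finset.sum_congr rfl fun k _ => ?_
  rcases le_total (y k) x with h | h
  · rw [abs_of_nonpos (sub_nonpos.2 h), max_eq_left (sub_nonneg.2 h),
      max_eq_right (sub_nonpos.2 h)]
    ring
  · rw [abs_of_nonneg (sub_nonneg.2 h), max_eq_right (sub_nonpos.2 h),
      max_eq_left (sub_nonneg.2 h)]
    ring

lemma expectile_level_mono {x x' : ℝ} (hxx' : x ≤ x') (hpos : 0 < ∑ k ∈ s, |y k - x|)
    (hpos' : 0 < ∑ k ∈ s, |y k - x'|) :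
    (∑ k ∈ s, max (x - y k) 0) / ∑ k ∈ s, |y k - x| ≤
      (∑ k ∈ s, max (x' - y k) 0) / ∑ k ∈ s, |y k - x'| := by
  have hN : ∑ k ∈ s, max (x - y k) 0 ≤ ∑ k ∈ s, max (x' - y k) 0 :=
    Finset.sum_le_sum fun k _ => max_le_max (by linarith) le_rfl
  have hP : ∑ k ∈ s, max (y k - x') 0 ≤ ∑ k ∈ s, max (y k - x) 0 :=
    Finset.sum_le_sum fun k _ => max_le_max (by linarith) le_rfl
  have hN₀ : 0 ≤ ∑ k ∈ s, max (x - y k) 0 := Finset.sum_nonneg fun k _ => le_max_right _ _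
  have hP₀ : 0 ≤ ∑ k ∈ s, max (y k - x') 0 := Finset.sum_nonneg fun k _ => le_max_right _ _
  rw [div_le_div_iff₀ hpos hpos', sum_abs_sub_eq, sum_abs_sub_eq]
  nlinarith

end Sums

lemma sum_max_sub_eq_of_monotoneOn {n i : ℕ} {Y : ℕ → ℝ} (hY : MonotoneOn Y (Set.Icc 1 n))
    (hi : i ∈ Finset.Icc 1 n) :
    ∑ k ∈ Finset.Icc 1 n, max (Y i - Y k) 0 = i * Y i - ∑ k ∈ Finset.Icc 1 i, Y k := by
  have hi' := Finset.mem_Icc.1 hi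
  have hsplit : ∑ k ∈ Finset.Icc 1 n, max (Y i - Y k) 0 =
      ∑ k ∈ Finset.Icc 1 n with k ≤ i, (Y i - Y k) := by
    rw [Finset.sum_filter]
    refine Finset.sum_congr rfl fun k hk => ?_
    have hk' := Finset.mem_Icc.1 hk
    split_ifs with hki
    · exact max_eq_left (sub_nonneg.2 (hY hk' hi' hki))
    · exact max_eq_right (sub_nonpos.2 (hY hi' hk' (not_le.1 hki).le))
  have hfilter : {k ∈ Finset.Icc 1 n | k ≤ i} = Finset.Icc 1 i := by
    ext k
    simp only [Finset.mem_filter, Finset.mem_Icc]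
    omega
  rw [hsplit, hfilter, Finset.sum_sub_distrib, Finset.sum_const, Nat.card_Icc, nsmul_eq_mul,
    Nat.add_sub_cancel]

theorem empirical_expectile_tau_star_general
    (n : ℕ) (Y : ℕ → ℝ)
    (hsort : ∀ j k, j ∈ Finset.Icc 1 n → k ∈ Finset.Icc 1 n → j ≤ k → Y j ≤ Y k)
    (τstar : ℕ → ℝ)
    (hτstar : ∀ i ∈ Finset.Icc 1 n,
      τstar i = (i * Y i - ∑ k ∈ Finset.Icc 1 i, Y k) /
        ∑ k ∈ Finset.Icc 1 n, |Y k - Y i|)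
    (hden : ∀ i ∈ Finset.Icc 1 n, 0 < ∑ k ∈ Finset.Icc 1 n, |Y k - Y i|)
    (τ : ℝ) (hτ : τ ∈ Set.Ioo (0:ℝ) 1)
    (μ : ℝ) (hμ : ∑ k ∈ Finset.Icc 1 n, ident τ μ (Y k) = 0) :
    (∀ i ∈ Finset.Icc 1 n, (μ = Y i ↔ τ = τstar i)) ∧
    (∀ i ∈ Finset.Icc 1 (n - 1), τstar i ≤ τstar (i + 1)) := by
  have hmono : MonotoneOn Y (Set.Icc 1 n) := fun j hj k hk =>
    hsort j k (Finset.mem_Icc.2 hj) (Finset.mem_Icc.2 hk)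
  have hlevel : ∀ i ∈ Finset.Icc 1 n, τstar i =
      (∑ k ∈ Finset.Icc 1 n, max (Y i - Y k) 0) / ∑ k ∈ Finset.Icc 1 n, |Y k - Y i| :=
    fun i hi => by rw [hτstar i hi, sum_max_sub_eq_of_monotoneOn hmono hi]
  refine ⟨fun i hi => ?_, fun i hi => ?_⟩
  · rw [hlevel i hi, ← sum_ident_eq_zero_iff _ _ (hden i hi)]
    exact ⟨fun h => h ▸ hμ, fun h =>
      (sum_ident_strictAnti Y ⟨i, hi⟩ hτ.1 hτ.2).injective (hμ.trans h.symm)⟩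
  · have hi' := Finset.mem_Icc.1 hi
    have hi₀ : i ∈ Finset.Icc 1 n := Finset.mem_Icc.2 ⟨hi'.1, by omega⟩
    have hi₁ : i + 1 ∈ Finset.Icc 1 n := Finset.mem_Icc.2 ⟨by omega, by omega⟩
    rw [hlevel i hi₀, hlevel (i + 1) hi₁]
    exact expectile_level_mono _ _ (hsort i (i + 1) hi₀ hi₁ i.le_succ) (hden i hi₀) (hden _ hi₁)

theorem empirical_expectile_tau_star
    (n : ℕ) (Y : ℕ → ℝ) (hn : 0 < n)
    (hsort : ∀ j k, j ∈ Finset.Icc 1 n → k ∈ Finset.Icc 1 n → j ≤ k → Y j ≤ Y k)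
    (hne : ¬ ∀ j ∈ Finset.Icc 1 n, Y j = Y 1)
    (τstar : ℕ → ℝ)
    (hτstar : ∀ i ∈ Finset.Icc 1 n,
      τstar i = (i * Y i - ∑ k ∈ Finset.Icc 1 i, Y k) /
        ∑ k ∈ Finset.Icc 1 n, |Y k - Y i|)
    (hden : ∀ i ∈ Finset.Icc 1 n, 0 < ∑ k ∈ Finset.Icc 1 n, |Y k - Y i|)
    (τ : ℝ) (hτ : τ ∈ Set.Ioo (0:ℝ) 1)
    (μ : ℝ) (hμ : ∑ k ∈ Finset.Icc 1 n, ident τ μ (Y k) = 0) :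
    (∀ i ∈ Finset.Icc 1 n, (μ = Y i ↔ τ = τstar i)) ∧
    (∀ i ∈ Finset.Icc 1 (n - 1), τstar i ≤ τstar (i + 1)) :=
  empirical_expectile_tau_star_general n Y hsort τstar hτstar hden τ hτ μ hμ
end
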